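/- For every i = 1, …, l and every character ν : Q → ℂ^×, the automorphism τ_{λ_i,ν} of U(𝔫̄) maps the left ideal U(𝔫̄)𝔫̄₊ into I_{λ_i}: τ_{λ_i,ν}(U(𝔫̄)𝔫̄₊) ⊆ I_{λ_i}. -/

import Mathlib

/-- The data of a finite-dimensional complex simple Lie algebra `𝔤` of type `A`, `D` or `E`
of rank `l`, recorded through: its Cartan matrix `M`; its set `Δ` of positive roots, each
written via its coordinates in the basis of simple roots (so the `i`-th simple root is
`Pi.single i 1`); and the affinization `𝔫̄ = 𝔫 ⊗ ℂ[t,t⁻¹]` of the nilpotent subalgebra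
`𝔫 = ⊕_{α ∈ Δ} ℂx_α`, where `x α m` stands for `x_α ⊗ t^m`.  The weight lattice `P` is
identified with `ℤ^l` via `λ ↦ (⟨λ, α_j⟩)_j`, so that `⟨λ, α⟩ = ∑_j ⟨λ, α_j⟩ α^j` for a
positive root `α` with simple-root coordinates `α^j`; in particular `⟨λ_i, α⟩ = α^i` and
`⟨α_i, α⟩ = ∑_j m_{ij} α^j`. -/
structure ADEContext where
  /-- the rank -/
  l : ℕ
  hl : 0 < l
  /-- the Cartan matrix -/
  M : Matrix (Fin l) (Fin l) ℤ
  M_symm : M.IsSymm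
  M_diag : ∀ i, M i i = 2
  M_offdiag : ∀ i j, i ≠ j → M i j = 0 ∨ M i j = -1
  M_posdef : (M.map ((↑) : ℤ → ℝ)).PosDef
  /-- the set of positive roots, in simple-root coordinates -/
  Δ : Finset (Fin l → ℤ)
  Δ_nonneg : ∀ α ∈ Δ, ∀ j, 0 ≤ α j
  Δ_ne_zero : ∀ α ∈ Δ, α ≠ 0
  simple_mem : ∀ i : Fin l, (Pi.single i 1 : Fin l → ℤ) ∈ Δ
  /-- every nonsimple positive root is a positive root plus a simple root -/
  Δ_decomp : ∀ α ∈ Δ, (∀ i : Fin l, α ≠ Pi.single i 1) →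
    ∃ β ∈ Δ, ∃ i : Fin l, α = β + Pi.single i 1
  /-- `α_i + α_j` is a root iff `i ≠ j` and `m_{ij} = -1` (simply-laced types) -/
  sum_simple_mem_iff : ∀ i j : Fin l,
    ((Pi.single i 1 + Pi.single j 1 : Fin l → ℤ) ∈ Δ) ↔ (i ≠ j ∧ M i j = -1)
  /-- `2α_i + α_j` is never a root (simply-laced types) -/
  two_simple_add_not_mem : ∀ i j : Fin l,
    ((2 : ℤ) • (Pi.single i 1 : Fin l → ℤ) + Pi.single j 1) ∉ Δ
  /-- the underlying type of the affinization `𝔫̄ = 𝔫 ⊗ ℂ[t,t⁻¹]` -/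
  nbar : Type
  [instLieRing : LieRing nbar]
  [instLieAlgebra : LieAlgebra ℂ nbar]
  /-- `x α m` is the element `x_α ⊗ t^m` of `𝔫̄` -/
  x : (Fin l → ℤ) → ℤ → nbar
  /-- the elements `x_α ⊗ t^m`, `α ∈ Δ`, `m ∈ ℤ`, form a `ℂ`-basis of `𝔫̄` -/
  basis : Module.Basis ({α // α ∈ Δ} × ℤ) ℂ nbar
  basis_eq : ∀ (α : {α // α ∈ Δ}) (m : ℤ), basis (α, m) = x α.1 m
  /-- the structure constants: `[x_α, x_β] = C_{α,β} x_{α+β}` -/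
  C : (Fin l → ℤ) → (Fin l → ℤ) → ℂ
  C_ne_zero : ∀ α ∈ Δ, ∀ β ∈ Δ, α + β ∈ Δ → C α β ≠ 0
  /-- the bracket `[x ⊗ t^m, y ⊗ t^n] = [x,y] ⊗ t^{m+n}` on `𝔫̄` -/
  bracket_x : ∀ α ∈ Δ, ∀ β ∈ Δ, ∀ m n : ℤ,
    ⁅x α m, x β n⁆ = if α + β ∈ Δ then C α β • x (α + β) (m + n) else 0

attribute [instance] ADEContext.instLieRing ADEContext.instLieAlgebra

namespace ADEContext

variable (ctx : ADEContext)

/-- the universal enveloping algebra `U(𝔫̄)` -/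
abbrev U : Type := UniversalEnvelopingAlgebra ℂ ctx.nbar

/-- the element `x_α(m) = x_α ⊗ t^m`, viewed in `U(𝔫̄)` -/
noncomputable def X (α : Fin ctx.l → ℤ) (m : ℤ) : ctx.U :=
  UniversalEnvelopingAlgebra.ι ℂ (ctx.x α m)

/-- the `i`-th simple root `α_i`, in simple-root coordinates -/
def sroot (i : Fin ctx.l) : Fin ctx.l → ℤ := Pi.single i 1

/-- the left ideal `U(𝔫̄)𝔫̄₊` of `U(𝔫̄)` generated by `𝔫̄₊ = 𝔫 ⊗ ℂ[t]` (equivalently, by the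
elements `x_α(m)`, `α ∈ Δ`, `m ≥ 0`, which span `𝔫̄₊`) -/
noncomputable def Uplus : Submodule ctx.U ctx.U :=
  Submodule.span ctx.U {u | ∃ α ∈ ctx.Δ, ∃ m : ℤ, 0 ≤ m ∧ u = ctx.X α m}

/-- the truncated relation `R^j_{-1,t} = ∑_{m₁,m₂ ≤ -1, m₁+m₂=-t} x_{α_j}(m₁)x_{α_j}(m₂)` -/
noncomputable def R (j : Fin ctx.l) (t : ℤ) : ctx.U :=
  ∑ m ∈ Finset.Icc (1 - t) (-1 : ℤ), ctx.X (ctx.sroot j) m * ctx.X (ctx.sroot j) (-t - m)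

/-- the left ideal `J` of `U(𝔫̄)` generated by the `R^j_{-1,t}`, `j = 1, …, l`, `t ≥ 2` -/
noncomputable def Jideal : Submodule ctx.U ctx.U :=
  Submodule.span ctx.U {u | ∃ j : Fin ctx.l, ∃ t : ℤ, 2 ≤ t ∧ u = ctx.R j t}

/-- the left ideal `I_{λ_0} = J + U(𝔫̄)𝔫̄₊` -/
noncomputable def I0 : Submodule ctx.U ctx.U := ctx.Jideal ⊔ ctx.Uplus

/-- the left ideal `I_{λ_i} = I_{λ_0} + U(𝔫̄)x_{α_i}(-1)`, `i = 1, …, l` -/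
noncomputable def Ii (i : Fin ctx.l) : Submodule ctx.U ctx.U :=
  ctx.I0 ⊔ Submodule.span ctx.U {ctx.X (ctx.sroot i) (-1)}

/-- the value `ν(α) = ∏_j ν_j^{α^j}` on `α ∈ Q` of the character `ν : Q → ℂ^×` determined by
`ν(α_j) = ν_j = νu j` -/
def charVal (νu : Fin ctx.l → ℂˣ) (α : Fin ctx.l → ℤ) : ℂ :=
  (∏ j, (νu j) ^ (α j) : ℂˣ)

end ADEContext

/-!
The generators `x_α(m)`, `m ≥ 0`, of `U(𝔫̄)𝔫̄₊` are sent by `τ_{λ_i,ν}` to multiples of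
`x_α(n)` with `n ≥ -⟨λ_i, α⟩`, so it suffices that every such `x_α(n)` lies in `I_{λ_i}`.
This goes by induction on the height of `α`: a simple root `α_j` contributes only `x_{α_j}(n)`
with `n ≥ 0`, or `x_{α_i}(-1)`, and otherwise `α = β + α_j` with `β` a positive root, so
`x_α(n)` is a nonzero multiple of the commutator of `x_β(n + δ_{ij})`, which lies in `I_{λ_i}`
by induction, and `x_{α_j}(-δ_{ij})`, which is `x_{α_i}(-1)` or lies in `U(𝔫̄)𝔫̄₊`.
-/

namespace ADEContext

variable (ctx : ADEContext)

lemma X_mem_Uplus {α : Fin ctx.l → ℤ} (hα : α ∈ ctx.Δ) {m : ℤ} (hm : 0 ≤ m) :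
    ctx.X α m ∈ ctx.Uplus :=
  Submodule.subset_span ⟨α, hα, m, hm, rfl⟩

lemma X_mul_X_sub_X_mul_X {α β : Fin ctx.l → ℤ} (hα : α ∈ ctx.Δ) (hβ : β ∈ ctx.Δ)
    (hαβ : α + β ∈ ctx.Δ) (m n : ℤ) :
    ctx.X α m * ctx.X β n - ctx.X β n * ctx.X α m = ctx.C α β • ctx.X (α + β) (m + n) := by
  let _ : LieRing ctx.U := LieRing.ofAssociativeRing
  have h := (UniversalEnvelopingAlgebra.ι ℂ (L := ctx.nbar)).map_lie (ctx.x α m) (ctx.x β n)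
  rw [ctx.bracket_x α hα β hβ m n, if_pos hαβ, map_smul] at h
  rw [X, X, X, ← Ring.lie_def]
  exact h.symm

lemma X_add_mem {I : Submodule ctx.U ctx.U} {α β : Fin ctx.l → ℤ} (hα : α ∈ ctx.Δ)
    (hβ : β ∈ ctx.Δ) (hαβ : α + β ∈ ctx.Δ) {m n : ℤ} (hm : ctx.X α m ∈ I)
    (hn : ctx.X β n ∈ I) : ctx.X (α + β) (m + n) ∈ I := by
  have hC := ctx.C_ne_zero α hα β hβ hαβ
  have hcomm : ctx.C α β • ctx.X (α + β) (m + n) ∈ I := by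
    rw [← ctx.X_mul_X_sub_X_mul_X hα hβ hαβ]
    exact I.sub_mem (I.smul_mem _ hn) (I.smul_mem _ hm)
  simpa [smul_smul, inv_mul_cancel₀ hC] using I.smul_of_tower_mem (ctx.C α β)⁻¹ hcomm

theorem X_mem_of_neg_le {I : Submodule ctx.U ctx.U} {i : Fin ctx.l} (hplus : ctx.Uplus ≤ I)
    (hi : ctx.X (ctx.sroot i) (-1) ∈ I) {α : Fin ctx.l → ℤ} (hα : α ∈ ctx.Δ) {n : ℤ}
    (hn : -α i ≤ n) : ctx.X α n ∈ I := by
  induction hN : (∑ k, α k).toNat using Nat.strong_induction_on generalizing α n with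
  | _ N ih =>
    by_cases hs : ∃ j, α = (Pi.single j 1 : Fin ctx.l → ℤ)
    · obtain ⟨j, rfl⟩ := hs
      rcases le_or_gt 0 n with h0 | h0
      · exact hplus (ctx.X_mem_Uplus hα h0)
      · obtain rfl : i = j := by by_contra hij; rw [Pi.single_eq_of_ne hij] at hn; omega
        obtain rfl : n = -1 := by rw [Pi.single_eq_same] at hn; omega
        exact hi
    push Not at hs
    obtain ⟨β, hβ, j, rfl⟩ := ctx.Δ_decomp α hα hs
    have hj := ctx.simple_mem j
    have hβ_height : 0 ≤ ∑ k, β k := Finset.sum_nonneg fun k _ => ctx.Δ_nonneg β hβ k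
    have hα_height : ∑ k, (β + Pi.single j 1 : Fin ctx.l → ℤ) k = ∑ k, β k + 1 := by
      simp [Finset.sum_add_distrib]
    set d : ℤ := (Pi.single j 1 : Fin ctx.l → ℤ) i
    have hxj : ctx.X (Pi.single j 1) (-d) ∈ I := by
      by_cases hij : i = j
      · subst hij
        simpa [d, sroot] using hi
      · exact hplus (ctx.X_mem_Uplus hj (by simp [d, Ne.symm hij]))
    have hxβ : ctx.X β (n + d) ∈ I :=
      ih _ (by omega) hβ (by rw [Pi.add_apply] at hn; omega) rfl
    simpa using ctx.X_add_mem hβ hj hα hxβ hxj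

end ADEContext

/-- For every `i = 1, …, l` and every character `ν : Q → ℂ^×` (determined by its values
`νu j = ν(α_j)`), the automorphism `τ_{λ_i,ν}` of `U(𝔫̄)` — i.e. the algebra automorphism
acting on generators by `x_α(m) ↦ ν(α) x_α(m - ⟨λ_i, α⟩)`, where `⟨λ_i, α⟩ = α^i` — maps
the left ideal `U(𝔫̄)𝔫̄₊` into `I_{λ_i}`. -/
theorem tau_lambda_maps_Uplus_into_Ii (ctx : ADEContext) (i : Fin ctx.l)
    (νu : Fin ctx.l → ℂˣ) (τ : ctx.U ≃ₐ[ℂ] ctx.U)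
    (hτ : ∀ α ∈ ctx.Δ, ∀ m : ℤ,
      τ (ctx.X α m) = ctx.charVal νu α • ctx.X α (m - α i)) :
    ∀ u ∈ ctx.Uplus, τ u ∈ ctx.Ii i := by
  have hplus : ctx.Uplus ≤ ctx.Ii i := le_sup_right.trans le_sup_left
  have hi : ctx.X (ctx.sroot i) (-1) ∈ ctx.Ii i :=
    (le_sup_right : _ ≤ ctx.Ii i) (Submodule.mem_span_singleton_self _)
  have hgen : ctx.Uplus ≤ (ctx.Ii i).comap (τ : ctx.U →+* ctx.U).toSemilinearMap := by
    refine Submodule.span_le.mpr ?_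
    rintro _ ⟨α, hα, m, hm, rfl⟩
    change τ (ctx.X α m) ∈ ctx.Ii i
    rw [hτ α hα m]
    exact (ctx.Ii i).smul_of_tower_mem _ (ctx.X_mem_of_neg_le hplus hi hα (by omega))
  exact fun u hu => hgen hu
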